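/- For every ψ ∈ L²(ℝ^m), the integral defining the Bargmann transform B(ψ)(z) converges absolutely for every z ∈ ℂ^m, the resulting function B(ψ) is holomorphic on all of ℂ^m, and it satisfies the pointwise bound |B(ψ)(z)| ≤ e^{|z|²/(4ℏ)} · ‖ψ‖_{L²} for every z ∈ ℂ^m. -/

import Mathlib

open Complex MeasureTheory

noncomputable section

/-- The Bargmann kernel `exp(−(1/(4ℏ))(4i q·z + 2|q|² − z·z))`. -/
def bKer (m : ℕ) (h : ℝ) (q : Fin m → ℝ) (z : Fin m → ℂ) : ℂ :=
  Complex.exp (-(1 / (4 * (h : ℂ))) *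
    (4 * Complex.I * (∑ j, (q j : ℂ) * z j) + 2 * (∑ j, ((q j : ℂ))^2) - ∑ j, (z j)^2))

/-- The Bargmann transform `B(ψ)(z) = (πℏ)^{-m/4} ∫ ψ(q) exp(−(1/(4ℏ))(4i q·z + 2|q|² − z·z)) dq`. -/
def barg (m : ℕ) (h : ℝ) (ψ : (Fin m → ℝ) → ℂ) (z : Fin m → ℂ) : ℂ :=
  (((Real.pi * h) ^ (-(m : ℝ) / 4) : ℝ) : ℂ) * ∫ q : Fin m → ℝ, ψ q * bKer m h q z

/-- A function on `ℂ^m` is holomorphic if it is complex-differentiable in each variable. -/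
def HoloEach {m : ℕ} (f : (Fin m → ℂ) → ℂ) : Prop :=
  ∀ (z : Fin m → ℂ) (j : Fin m),
    DifferentiableAt ℂ (fun w : ℂ => f (Function.update z j w)) (z j)

/-!
In `q` the kernel is a Gaussian, `|bKer q z| = e^{|z|²/4ℏ} e^{-|q - Im z|²/2ℏ}`, whose `L²` norm is
exactly `e^{|z|²/4ℏ} (πℏ)^{m/4}`; Cauchy–Schwarz against `ψ` gives the absolute convergence and the
bound. The kernel is entire in `z`, and for `z` in a bounded set it is dominated by one fixed
Gaussian in `q`. Cauchy's estimate turns this uniform bound into a bound on the `z`-derivative, which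
justifies differentiating under the integral sign.
-/

open Metric Filter Topology

section ParametricHolomorphy

variable {α E : Type*} [MeasurableSpace α] {μ : Measure α} [NormedAddCommGroup E]
  [NormedSpace ℂ E]

theorem aestronglyMeasurable_of_hasDerivAt {F : ℂ → α → E} {F' : α → E} {x₀ : ℂ}
    (hF_meas : ∀ w, AEStronglyMeasurable (F w) μ)
    (h_diff : ∀ᵐ a ∂μ, HasDerivAt (F · a) (F' a) x₀) :
    AEStronglyMeasurable F' μ :=
  aestronglyMeasurable_of_tendsto_ae (𝓝[≠] (0 : ℂ))
    (fun t => ((hF_meas (x₀ + t)).sub (hF_meas x₀)).const_smul t⁻¹)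
    (h_diff.mono fun _ ha => hasDerivAt_iff_tendsto_slope_zero.1 ha)

theorem differentiableAt_integral_of_dominated [CompleteSpace E] {F : ℂ → α → E}
    {bound : α → ℝ} {x₀ : ℂ} {R : ℝ} (hR : 0 < R)
    (hF_meas : ∀ w, AEStronglyMeasurable (F w) μ)
    (hF_diff : ∀ᵐ a ∂μ, DifferentiableOn ℂ (F · a) (ball x₀ R))
    (h_bound : ∀ᵐ a ∂μ, ∀ w ∈ ball x₀ R, ‖F w a‖ ≤ bound a)
    (bound_integrable : Integrable bound μ) :
    DifferentiableAt ℂ (fun w => ∫ a, F w a ∂μ) x₀ := by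
  have hr : 0 < R / 2 := half_pos hR
  have h_diff : ∀ᵐ a ∂μ, ∀ w ∈ ball x₀ (R / 2), HasDerivAt (F · a) (deriv (F · a) w) w :=
    hF_diff.mono fun a ha w hw =>
      (ha.differentiableAt (isOpen_ball.mem_nhds
        (ball_subset_ball (half_le_self hR.le) hw))).hasDerivAt
  have h_deriv_bound :
      ∀ᵐ a ∂μ, ∀ w ∈ ball x₀ (R / 2), ‖deriv (F · a) w‖ ≤ bound a / (R / 2) := by
    filter_upwards [hF_diff, h_bound] with a ha_diff ha_bound w hw
    have hsub : closedBall w (R / 2) ⊆ ball x₀ R :=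
      closedBall_subset_ball' (by rw [mem_ball] at hw; linarith)
    exact norm_deriv_le_of_forall_mem_sphere_norm_le hr (ha_diff.diffContOnCl_ball hsub)
      fun z hz => ha_bound z (hsub (sphere_subset_closedBall hz))
  exact (hasDerivAt_integral_of_dominated_loc_of_deriv_le (ball_mem_nhds x₀ hr)
    (Eventually.of_forall hF_meas)
    (bound_integrable.mono' (hF_meas x₀) (h_bound.mono fun a ha => ha x₀ (mem_ball_self hR)))
    (aestronglyMeasurable_of_hasDerivAt hF_meas
      (h_diff.mono fun a ha => ha x₀ (mem_ball_self hr)))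
    h_deriv_bound (bound_integrable.div_const _) h_diff).2.differentiableAt

end ParametricHolomorphy

theorem norm_integral_mul_le_eLpNorm_mul_eLpNorm {α 𝕜 : Type*} [MeasurableSpace α]
    {μ : Measure α} [RCLike 𝕜] {f g : α → 𝕜} (hf : MemLp f 2 μ) (hg : MemLp g 2 μ) :
    ‖∫ a, f a * g a ∂μ‖ ≤ (eLpNorm f 2 μ).toReal * (eLpNorm g 2 μ).toReal := by
  have holder := eLpNorm_smul_le_mul_eLpNorm (p := 2) (q := 2) (r := 1) hg.1 hf.1
  rw [← ENNReal.toReal_mul]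
  calc ‖∫ a, f a * g a ∂μ‖ ≤ ∫ a, ‖f a * g a‖ ∂μ := norm_integral_le_integral_norm _
    _ = (eLpNorm (f • g) 1 μ).toReal := by
      rw [eLpNorm_one_eq_lintegral_enorm]
      exact integral_norm_eq_lintegral_enorm (hf.1.mul hg.1)
    _ ≤ _ := ENNReal.toReal_mono (ENNReal.mul_ne_top hf.eLpNorm_ne_top hg.eLpNorm_ne_top) holder

section Gaussian

variable {ι : Type*} [Fintype ι]

theorem exp_neg_mul_sum_sq_eq_prod (c : ℝ) (q : ι → ℝ) :
    Real.exp (-c * ∑ i, q i ^ 2) = ∏ i, Real.exp (-c * q i ^ 2) := by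
  rw [Finset.mul_sum, Real.exp_sum]

theorem integrable_exp_neg_mul_sum_sq {c : ℝ} (hc : 0 < c) :
    Integrable (fun q : ι → ℝ => Real.exp (-c * ∑ i, q i ^ 2)) := by
  simp_rw [exp_neg_mul_sum_sq_eq_prod]
  exact Integrable.fintype_prod fun _ => integrable_exp_neg_mul_sq hc

theorem integral_exp_neg_mul_sum_sq (c : ℝ) :
    ∫ q : ι → ℝ, Real.exp (-c * ∑ i, q i ^ 2) = √(Real.pi / c) ^ Fintype.card ι := by
  simp_rw [exp_neg_mul_sum_sq_eq_prod]
  rw [volume_pi, integral_fintype_prod_eq_pow (fun x : ℝ => Real.exp (-c * x ^ 2)),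
    integral_gaussian]

theorem memLp_two_exp_neg_mul_sum_sq {c : ℝ} (hc : 0 < c) :
    MemLp (fun q : ι → ℝ => Real.exp (-c * ∑ i, q i ^ 2)) 2 := by
  have hcont : Continuous fun q : ι → ℝ => Real.exp (-c * ∑ i, q i ^ 2) := by fun_prop
  refine (memLp_two_iff_integrable_sq hcont.aestronglyMeasurable).2 ?_
  refine (integrable_exp_neg_mul_sum_sq (mul_pos two_pos hc)).congr (ae_of_all _ fun q => ?_)
  dsimp only
  rw [← Real.exp_nat_mul]
  ring_nf

end Gaussian

section Kernel

variable {m : ℕ} {h : ℝ}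

theorem norm_bKer (q : Fin m → ℝ) (z : Fin m → ℂ) :
    ‖bKer m h q z‖ = Real.exp ((∑ j, normSq (z j)) / (4 * h)) *
      Real.exp (-(1 / (2 * h)) * ∑ j, (q j - (z j).im) ^ 2) := by
  have hcoef : -(1 / (4 * (h : ℂ))) = ((-(1 / (4 * h)) : ℝ) : ℂ) := by push_cast; ring
  rw [bKer, Complex.norm_exp, ← Real.exp_add, hcoef, re_ofReal_mul]
  simp only [sub_re, add_re, re_sum, mul_re, mul_im, I_re, I_im, ofReal_re, ofReal_im,
    re_ofNat, im_ofNat, normSq_apply, pow_two, Finset.mul_sum, Finset.sum_div,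
    ← Finset.sum_add_distrib, ← Finset.sum_sub_distrib]
  exact congrArg Real.exp (Finset.sum_congr rfl fun j _ => by ring)

theorem sq_norm_bKer (q : Fin m → ℝ) (z : Fin m → ℂ) :
    ‖bKer m h q z‖ ^ 2 = Real.exp ((∑ j, normSq (z j)) / (2 * h)) *
      Real.exp (-(1 / h) * ∑ j, (q j - (z j).im) ^ 2) := by
  rw [norm_bKer, mul_pow, ← Real.exp_nat_mul, ← Real.exp_nat_mul]
  congr 2 <;> field_simp <;> ring

theorem continuous_bKer (z : Fin m → ℂ) : Continuous fun q => bKer m h q z := by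
  unfold bKer; fun_prop

theorem differentiable_bKer (q : Fin m → ℝ) : Differentiable ℂ (bKer m h q) := by
  unfold bKer; fun_prop

theorem integral_sq_norm_bKer (z : Fin m → ℂ) :
    ∫ q, ‖bKer m h q z‖ ^ 2 =
      Real.exp ((∑ j, normSq (z j)) / (2 * h)) * √(Real.pi * h) ^ m := by
  have hshift := integral_sub_right_eq_self (μ := volume)
    (fun q : Fin m → ℝ => Real.exp (-(1 / h) * ∑ j, q j ^ 2)) (fun j => (z j).im)
  simp only [Pi.sub_apply] at hshift
  simp_rw [sq_norm_bKer]
  rw [integral_const_mul, hshift, integral_exp_neg_mul_sum_sq, Fintype.card_fin, one_div,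
    div_inv_eq_mul]

theorem memLp_bKer (hh : 0 < h) (z : Fin m → ℂ) : MemLp (fun q => bKer m h q z) 2 := by
  refine (memLp_two_iff_integrable_sq_norm (continuous_bKer z).aestronglyMeasurable).2 ?_
  simp_rw [sq_norm_bKer]
  exact (((integrable_exp_neg_mul_sum_sq (one_div_pos.2 hh)).comp_sub_right
    fun j => (z j).im).const_mul _)

theorem eLpNorm_bKer (hh : 0 < h) (z : Fin m → ℂ) :
    (eLpNorm (fun q => bKer m h q z) 2).toReal =
      Real.exp ((∑ j, normSq (z j)) / (4 * h)) * (Real.pi * h) ^ ((m : ℝ) / 4) := by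
  rw [(memLp_bKer hh z).eLpNorm_eq_integral_rpow_norm two_ne_zero ENNReal.ofNat_ne_top,
    ENNReal.toReal_ofReal (by positivity)]
  simp only [ENNReal.toReal_ofNat, Real.rpow_two, integral_sq_norm_bKer]
  rw [Real.mul_rpow (by positivity) (by positivity), ← Real.exp_mul, Real.sqrt_eq_rpow,
    ← Real.rpow_natCast, ← Real.rpow_mul (by positivity), ← Real.rpow_mul (by positivity)]
  congr 2 <;> field_simp <;> ring

theorem norm_bKer_le (hh : 0 < h) (q : Fin m → ℝ) (z : Fin m → ℂ) :
    ‖bKer m h q z‖ ≤ Real.exp (3 * (∑ j, normSq (z j)) / (4 * h)) *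
      Real.exp (-(1 / (4 * h)) * ∑ j, q j ^ 2) := by
  -- `q² - 2 (q - y)² - 2 |x + i y|² = -(q - 2 y)² - 2 x²`
  have key : ∑ j, (q j ^ 2 - 2 * (q j - (z j).im) ^ 2 - 2 * normSq (z j)) ≤ 0 :=
    Finset.sum_nonpos fun j _ => by
      rw [normSq_apply]
      nlinarith [sq_nonneg (q j - 2 * (z j).im), sq_nonneg (z j).re]
  rw [norm_bKer, ← Real.exp_add, ← Real.exp_add, Real.exp_le_exp, ← sub_nonneg]
  have e : 3 * (∑ j, normSq (z j)) / (4 * h) + -(1 / (4 * h)) * ∑ j, q j ^ 2 -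
      ((∑ j, normSq (z j)) / (4 * h) + -(1 / (2 * h)) * ∑ j, (q j - (z j).im) ^ 2) =
      -(∑ j, (q j ^ 2 - 2 * (q j - (z j).im) ^ 2 - 2 * normSq (z j))) / (4 * h) := by
    simp only [Finset.sum_sub_distrib, ← Finset.mul_sum]
    field_simp
    ring
  rw [e]
  exact div_nonneg (neg_nonneg.2 key) (by positivity)

end Kernel

theorem sum_normSq_update_le {ι : Type*} [Fintype ι] [DecidableEq ι] (z : ι → ℂ) (j : ι)
    (w : ℂ) : ∑ k, normSq (Function.update z j w k) ≤ ∑ k, normSq (z k) + normSq w := by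
  calc ∑ k, normSq (Function.update z j w k)
      ≤ ∑ k, (normSq (z k) + if k = j then normSq w else 0) :=
        Finset.sum_le_sum fun k _ => by
          rcases eq_or_ne k j with rfl | hk <;> simp [*, normSq_nonneg]
    _ = _ := by rw [Finset.sum_add_distrib, Finset.sum_ite_eq']; simp

theorem holoEach_barg {m : ℕ} {h : ℝ} (hh : 0 < h) {ψ : (Fin m → ℝ) → ℂ}
    (hψ : MemLp ψ 2 (volume : Measure (Fin m → ℝ))) : HoloEach (barg m h ψ) := by
  intro z j
  set S := ∑ k, normSq (z k) + (‖z j‖ + 1) ^ 2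
  have h_int : Integrable fun q : Fin m → ℝ =>
      ‖ψ q‖ * (Real.exp (3 * S / (4 * h)) * Real.exp (-(1 / (4 * h)) * ∑ k, q k ^ 2)) :=
    hψ.norm.integrable_mul ((memLp_two_exp_neg_mul_sum_sq (by positivity)).const_mul _)
  unfold barg
  refine (differentiableAt_integral_of_dominated
    (F := fun w q => ψ q * bKer m h q (Function.update z j w)) one_pos
    (fun w => hψ.1.mul (continuous_bKer _).aestronglyMeasurable) ?_ ?_ h_int).const_mul _
  · exact ae_of_all _ fun q => (((differentiable_bKer q).comp fun w =>
      (hasDerivAt_update z j w).differentiableAt).const_mul (ψ q)).differentiableOn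
  · refine ae_of_all _ fun q w hw => ?_
    have hw' : normSq w ≤ (‖z j‖ + 1) ^ 2 := by
      rw [mem_ball, dist_eq_norm] at hw
      rw [normSq_eq_norm_sq]
      gcongr
      linarith [norm_le_norm_add_norm_sub' w (z j)]
    have hS : ∑ k, normSq (Function.update z j w k) ≤ S := by
      linarith [sum_normSq_update_le z j w]
    rw [norm_mul]
    refine mul_le_mul_of_nonneg_left ((norm_bKer_le hh q _).trans ?_) (norm_nonneg _)
    gcongr

theorem norm_barg_le {m : ℕ} {h : ℝ} (hh : 0 < h) {ψ : (Fin m → ℝ) → ℂ}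
    (hψ : MemLp ψ 2 (volume : Measure (Fin m → ℝ))) (z : Fin m → ℂ) :
    ‖barg m h ψ z‖ ≤ Real.exp ((∑ j, normSq (z j)) / (4 * h)) *
      (eLpNorm ψ 2 (volume : Measure (Fin m → ℝ))).toReal := by
  have hP : 0 < Real.pi * h := by positivity
  calc ‖barg m h ψ z‖
      = (Real.pi * h) ^ (-(m : ℝ) / 4) * ‖∫ q, ψ q * bKer m h q z‖ := by
        rw [barg, norm_mul, norm_real, Real.norm_of_nonneg (by positivity)]
    _ ≤ (Real.pi * h) ^ (-(m : ℝ) / 4) * ((eLpNorm ψ 2).toReal *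
          (Real.exp ((∑ j, normSq (z j)) / (4 * h)) * (Real.pi * h) ^ ((m : ℝ) / 4))) := by
        rw [← eLpNorm_bKer hh z]
        gcongr
        exact norm_integral_mul_le_eLpNorm_mul_eLpNorm hψ (memLp_bKer hh z)
    _ = _ := by
        rw [neg_div, Real.rpow_neg hP.le]
        field_simp

theorem statement12_general (m : ℕ) (h : ℝ) (hh : 0 < h)
    (ψ : (Fin m → ℝ) → ℂ) (hψ : MemLp ψ 2 (volume : Measure (Fin m → ℝ))) :
    (∀ z : Fin m → ℂ, Integrable (fun q : Fin m → ℝ => ψ q * bKer m h q z)) ∧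
    HoloEach (barg m h ψ) ∧
    (∀ z : Fin m → ℂ,
      ‖barg m h ψ z‖ ≤ Real.exp ((∑ j, Complex.normSq (z j)) / (4 * h)) *
        (eLpNorm ψ 2 (volume : Measure (Fin m → ℝ))).toReal) :=
  ⟨fun z => hψ.integrable_mul (memLp_bKer hh z), holoEach_barg hh hψ, norm_barg_le hh hψ⟩

/-- For `ψ ∈ L²(ℝ^m)` the Bargmann transform is everywhere defined by an absolutely
convergent integral, holomorphic, and satisfies `|B(ψ)(z)| ≤ e^{|z|²/(4ℏ)}‖ψ‖₂`. -/
theorem statement12 (m : ℕ) (hm : 1 ≤ m) (h : ℝ) (hh : 0 < h)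
    (ψ : (Fin m → ℝ) → ℂ) (hψ : MemLp ψ 2 (volume : Measure (Fin m → ℝ))) :
    (∀ z : Fin m → ℂ, Integrable (fun q : Fin m → ℝ => ψ q * bKer m h q z)) ∧
    HoloEach (barg m h ψ) ∧
    (∀ z : Fin m → ℂ,
      ‖barg m h ψ z‖ ≤ Real.exp ((∑ j, Complex.normSq (z j)) / (4 * h)) *
        (eLpNorm ψ 2 (volume : Measure (Fin m → ℝ))).toReal) :=
  statement12_general m h hh ψ hψ
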